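/- Let A, B be strings of lengths m and n, σ a character, K'' the all scores matrix of Aσ (σ appended to A) and B, and Diff = K'' − K. Assume every row and every column of K□ contains at most one nonzero entry and every nonzero entry of K□ equals 1. Then for all 0 ≤ i ≤ j ≤ n: Diff[i,j] = 1 if and only if k = prevmatch(j,σ,B) > −∞, every column j' with k ≤ j' ≤ j of K□ contains exactly one pivotal point, and i is strictly less than the minimum row index among all pivotal points of K□ in columns k,…,j. -/

import Mathlib

variable {α : Type*}

/-- LCS of two lists: the maximum length of a common sublist. -/
noncomputable def LCS (X Y : List α) : ℕ :=
  sSup {k | ∃ Z : List α, Z.length = k ∧ Z.Sublist X ∧ Z.Sublist Y}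

/-- `substr S i j` is S[i..j]: the characters of S at (1-based) positions i+1,…,j. -/
def substr (S : List α) (i j : ℕ) : List α := (S.take j).drop i

/-- The density matrix D□ of a matrix D. -/
def density (D : ℕ → ℕ → ℤ) (i j : ℕ) : ℤ :=
  D i j + D (i - 1) (j - 1) - D (i - 1) j - D i (j - 1)

/-- The all scores matrix K of A and B: K[i,j] = LCS(B[i..j], A) if i ≤ j, else j - i. -/
noncomputable def Kmat (A B : List α) (i j : ℕ) : ℤ :=
  if i ≤ j then (LCS (substr B i j) A : ℤ) else (j : ℤ) - (i : ℤ)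

/-- The all scores matrix P of A and B: P[i,j] = LCS(B[i..n], A[0..j]). -/
noncomputable def Pmat (A B : List α) (i j : ℕ) : ℤ :=
  (LCS (substr B i B.length) (substr A 0 j) : ℤ)

/-- nextmatch(i,σ,B): minimum (1-based) position i' with i < i' ≤ |B| and B[i'] = σ; ⊤ (∞) if none. -/
noncomputable def nextmatch (i : ℕ) (σ : α) (B : List α) : ℕ∞ :=
  sInf {k : ℕ∞ | ∃ k' : ℕ, k = (k' : ℕ∞) ∧ i < k' ∧ k' ≤ B.length ∧ B[k' - 1]? = some σ}

/-- prevmatch(j,σ,B): maximum (1-based) position i' with 1 ≤ i' ≤ j and B[i'] = σ; ⊥ (−∞) if none. -/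
noncomputable def prevmatch (j : ℕ) (σ : α) (B : List α) : WithBot ℕ :=
  sSup {k : WithBot ℕ | ∃ k' : ℕ, k = (k' : WithBot ℕ) ∧ 1 ≤ k' ∧ k' ≤ j ∧ B[k' - 1]? = some σ}

/-!
An LCS of `B[i..j]` and `Aσ` is longer than one with `A` exactly when it can end by matching the
final `σ` against some `B[p] = σ`, `i < p ≤ j`, without loss on the prefix: `K[i,p-1] = K[i,j]`.
Since `K[i,·]` is monotone, the best choice is the last such `p`, namely `k = prevmatch(j,σ,B)`.
Telescoping the density down column `j'` shows that the increment `K[i,j'] - K[i,j'-1]` is `1`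
minus the sum of `K□` over rows `i+1,…,j'` of that column, so with `0/1` densities
`K[i,·]` is constant on `[k-1, j]` iff every column `k,…,j` has a pivotal point in a row `> i`.
As `K□` vanishes below the diagonal and has at most one pivotal point per column, this is the claim.
-/

open Finset

theorem Finset.sum_Ioc_sub_pred {M : Type*} [AddCommGroup M] (f : ℕ → M) {a b : ℕ}
    (hab : a ≤ b) : ∑ x ∈ Ioc a b, (f x - f (x - 1)) = f b - f a := by
  induction b, hab using Nat.le_induction with
  | base => simp
  | succ b hab ih =>
    rw [sum_Ioc_succ_top hab, ih, Nat.add_sub_cancel]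
    abel

theorem LCS_bddAbove (X Y : List α) :
    BddAbove {k | ∃ Z : List α, Z.length = k ∧ Z.Sublist X ∧ Z.Sublist Y} :=
  ⟨X.length, fun _ ⟨_, hZ, hZX, _⟩ => hZ ▸ hZX.length_le⟩

theorem length_le_LCS {X Y Z : List α} (hX : Z.Sublist X) (hY : Z.Sublist Y) :
    Z.length ≤ LCS X Y :=
  le_csSup (LCS_bddAbove X Y) ⟨Z, rfl, hX, hY⟩

theorem exists_sublist_length_eq_LCS (X Y : List α) :
    ∃ Z : List α, Z.length = LCS X Y ∧ Z.Sublist X ∧ Z.Sublist Y := by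
  have hnil : 0 ∈ {k | ∃ Z : List α, Z.length = k ∧ Z.Sublist X ∧ Z.Sublist Y} :=
    ⟨[], rfl, List.nil_sublist X, List.nil_sublist Y⟩
  exact Nat.sSup_mem ⟨0, hnil⟩ (LCS_bddAbove X Y)

theorem LCS_nil_left (Y : List α) : LCS [] Y = 0 := by
  obtain ⟨Z, hZ, hZX, -⟩ := exists_sublist_length_eq_LCS ([] : List α) Y
  rw [← hZ, List.sublist_nil.1 hZX, List.length_nil]

theorem LCS_mono_left {X X' : List α} (h : X.Sublist X') (Y : List α) :
    LCS X Y ≤ LCS X' Y := by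
  obtain ⟨Z, hZ, hZX, hZY⟩ := exists_sublist_length_eq_LCS X Y
  exact hZ ▸ length_le_LCS (hZX.trans h) hZY

theorem LCS_append_singleton_le (X Y : List α) (c : α) :
    LCS X (Y ++ [c]) ≤ LCS X Y + 1 := by
  obtain ⟨Z, hZ, hZX, hZY⟩ := exists_sublist_length_eq_LCS X (Y ++ [c])
  obtain ⟨Z₁, Z₂, rfl, hZ₁Y, hZ₂⟩ := List.sublist_append_iff.1 hZY
  have hZ₁ := length_le_LCS ((List.sublist_append_left Z₁ Z₂).trans hZX) hZ₁Y
  rcases List.sublist_singleton.1 hZ₂ with rfl | rfl <;>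
    simp only [List.append_nil, List.length_append, List.length_singleton] at hZ <;> omega

theorem LCS_append_singleton_eq_add_one_iff (X A : List α) (σ : α) :
    LCS X (A ++ [σ]) = LCS X A + 1 ↔
      ∃ ℓ, X[ℓ]? = some σ ∧ LCS (X.take ℓ) A = LCS X A := by
  constructor
  · intro h
    obtain ⟨Z, hZ, hZX, hZA⟩ := exists_sublist_length_eq_LCS X (A ++ [σ])
    obtain ⟨Z₁, Z₂, rfl, hZ₁A, hZ₂⟩ := List.sublist_append_iff.1 hZA
    rcases List.sublist_singleton.1 hZ₂ with rfl | rfl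
    · have := length_le_LCS (by simpa using hZX) hZ₁A
      simp only [List.append_nil] at hZ
      omega
    obtain ⟨R₁, R₂, rfl, hZ₁R, hσR⟩ := List.append_sublist_iff.1 hZX
    obtain ⟨s, t, rfl⟩ := List.append_of_mem (List.singleton_sublist.1 hσR)
    rw [← List.append_assoc] at h hZ ⊢
    refine ⟨(R₁ ++ s).length, by simp,
      le_antisymm (LCS_mono_left (List.take_sublist _ _) A) ?_⟩
    rw [List.take_left' rfl]
    have := length_le_LCS (hZ₁R.trans (List.sublist_append_left R₁ s)) hZ₁A
    simp only [List.length_append, List.length_singleton] at hZ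
    omega
  · rintro ⟨ℓ, hσ, hℓ⟩
    refine le_antisymm (LCS_append_singleton_le X A σ) ?_
    obtain ⟨Z, hZ, hZX, hZA⟩ := exists_sublist_length_eq_LCS (X.take ℓ) A
    have htake : X.take (ℓ + 1) = X.take ℓ ++ [σ] := by rw [List.take_add_one, hσ]; rfl
    have hσZX : (Z ++ [σ]).Sublist X :=
      (hZX.append (List.Sublist.refl [σ])).trans (htake ▸ List.take_sublist (ℓ + 1) X)
    have := length_le_LCS hσZX (hZA.append (List.Sublist.refl [σ]))
    simp only [List.length_append, List.length_singleton] at this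
    omega

theorem getElem?_substr (B : List α) (i j ℓ : ℕ) :
    (substr B i j)[ℓ]? = if i + ℓ < j then B[i + ℓ]? else none := by
  rw [substr, List.getElem?_drop, List.getElem?_take]

theorem take_substr (B : List α) {i j ℓ : ℕ} (h : i + ℓ ≤ j) :
    (substr B i j).take ℓ = substr B i (i + ℓ) := by
  rw [substr, substr, List.drop_take, List.drop_take, List.take_take]
  congr 1
  omega

section Kmat

variable (A B : List α)

theorem Kmat_of_le {i j : ℕ} (h : i ≤ j) : Kmat A B i j = LCS (substr B i j) A := if_pos h

theorem Kmat_of_ge {i j : ℕ} (h : j ≤ i) : Kmat A B i j = (j : ℤ) - i := by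
  rcases h.lt_or_eq with h | rfl
  · exact if_neg (by omega)
  · rw [Kmat_of_le A B le_rfl, substr, List.drop_eq_nil_of_le (by simp), LCS_nil_left]
    simp

theorem Kmat_monotone (i : ℕ) : Monotone (Kmat A B i) := by
  intro q j hqj
  by_cases hiq : i ≤ q
  · have hprefix : substr B i q = (substr B i j).take (q - i) := by
      rw [take_substr B (by omega), Nat.add_sub_cancel' hiq]
    rw [Kmat_of_le A B hiq, Kmat_of_le A B (hiq.trans hqj), hprefix]
    exact_mod_cast LCS_mono_left (List.take_sublist _ _) A
  · rw [Kmat_of_ge A B (by omega : q ≤ i)]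
    by_cases hij : i ≤ j
    · rw [Kmat_of_le A B hij]
      omega
    · rw [Kmat_of_ge A B (by omega : j ≤ i)]
      omega

theorem density_Kmat_eq_zero_of_lt {i j : ℕ} (hj : 1 ≤ j) (hji : j < i) :
    density (Kmat A B) i j = 0 := by
  rw [density, Kmat_of_ge A B hji.le, Kmat_of_ge A B (by omega : j - 1 ≤ i - 1),
    Kmat_of_ge A B (by omega : j ≤ i - 1), Kmat_of_ge A B (by omega : j - 1 ≤ i)]
  omega

theorem Kmat_eq_iff_forall_Kmat_eq_Kmat_pred {i q j : ℕ} (hqj : q ≤ j) :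
    Kmat A B i q = Kmat A B i j ↔ ∀ x, q < x → x ≤ j → Kmat A B i x = Kmat A B i (x - 1) := by
  have hinc : ∀ x ∈ Ioc q j, 0 ≤ Kmat A B i x - Kmat A B i (x - 1) := fun x _ =>
    sub_nonneg.2 (Kmat_monotone A B i (Nat.sub_le x 1))
  rw [eq_comm, ← sub_eq_zero, ← sum_Ioc_sub_pred _ hqj, sum_eq_zero_iff_of_nonneg hinc]
  simp only [mem_Ioc, and_imp, sub_eq_zero]

theorem Kmat_sub_Kmat_pred_eq_one_sub_sum_density {i j : ℕ} (hij : i ≤ j) (hj : 1 ≤ j) :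
    Kmat A B i j - Kmat A B i (j - 1) = 1 - ∑ r ∈ Ioc i j, density (Kmat A B) r j := by
  have hcol : ∀ r ∈ Ioc i j, density (Kmat A B) r j =
      (Kmat A B r j - Kmat A B r (j - 1)) - (Kmat A B (r - 1) j - Kmat A B (r - 1) (j - 1)) :=
    fun r _ => by rw [density]; ring
  rw [sum_congr rfl hcol, sum_Ioc_sub_pred (fun r => Kmat A B r j - Kmat A B r (j - 1)) hij,
    Kmat_of_ge A B le_rfl, Kmat_of_ge A B (Nat.sub_le j 1)]
  omega

theorem Kmat_eq_Kmat_pred_iff_exists_density_ne_zero {i j : ℕ} (hij : i ≤ j) (hj : 1 ≤ j)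
    (hval : ∀ r, i < r → r ≤ j → density (Kmat A B) r j ≠ 0 → density (Kmat A B) r j = 1) :
    Kmat A B i j = Kmat A B i (j - 1) ↔ ∃ r, i < r ∧ r ≤ j ∧ density (Kmat A B) r j ≠ 0 := by
  have hnonneg : ∀ r ∈ Ioc i j, 0 ≤ density (Kmat A B) r j := by
    intro r hr
    rw [mem_Ioc] at hr
    by_cases h : density (Kmat A B) r j = 0
    · exact h.ge
    · exact (hval r hr.1 hr.2 h).ge.trans' zero_le_one
  have hsum := Kmat_sub_Kmat_pred_eq_one_sub_sum_density A B hij hj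
  have hmono := Kmat_monotone A B i (Nat.sub_le j 1)
  have hpos := sum_nonneg hnonneg
  have hexists : (∃ r, i < r ∧ r ≤ j ∧ density (Kmat A B) r j ≠ 0) ↔
      ∑ r ∈ Ioc i j, density (Kmat A B) r j ≠ 0 := by
    rw [Ne, sum_eq_zero_iff_of_nonneg hnonneg]
    simp only [mem_Ioc, not_forall, exists_prop, and_assoc]
  rw [hexists]
  omega

theorem Kmat_append_singleton_sub_eq_one_iff (σ : α) {i j : ℕ} (hij : i ≤ j) :
    Kmat (A ++ [σ]) B i j - Kmat A B i j = 1 ↔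
      ∃ p, i < p ∧ p ≤ j ∧ B[p - 1]? = some σ ∧ Kmat A B i (p - 1) = Kmat A B i j := by
  rw [Kmat_of_le _ B hij, Kmat_of_le A B hij,
    show ∀ a b : ℕ, (a : ℤ) - b = 1 ↔ a = b + 1 by omega, LCS_append_singleton_eq_add_one_iff]
  constructor
  · rintro ⟨ℓ, hσ, hℓ⟩
    rw [getElem?_substr] at hσ
    split_ifs at hσ with hℓj
    refine ⟨i + ℓ + 1, by omega, hℓj, hσ, ?_⟩
    rw [Nat.add_sub_cancel, Kmat_of_le A B (Nat.le_add_right i ℓ), ← take_substr B hℓj.le, hℓ]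
  · rintro ⟨p, hip, hpj, hσ, hp⟩
    refine ⟨p - 1 - i, ?_, ?_⟩
    · rw [getElem?_substr, if_pos (by omega), Nat.add_sub_cancel' (by omega), hσ]
    · rw [take_substr B (by omega), Nat.add_sub_cancel' (by omega)]
      exact_mod_cast (Kmat_of_le A B (by omega : i ≤ p - 1)).symm.trans hp

theorem Kmat_append_singleton_sub_eq_one_iff_pivots (σ : α) {i j : ℕ} (hij : i ≤ j)
    (hval : ∀ r j', i < r → r ≤ j' → j' ≤ j →
      density (Kmat A B) r j' ≠ 0 → density (Kmat A B) r j' = 1) :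
    Kmat (A ++ [σ]) B i j - Kmat A B i j = 1 ↔
      ∃ p, i < p ∧ p ≤ j ∧ B[p - 1]? = some σ ∧
        ∀ j', p ≤ j' → j' ≤ j → ∃ r, i < r ∧ r ≤ j' ∧ density (Kmat A B) r j' ≠ 0 := by
  rw [Kmat_append_singleton_sub_eq_one_iff A B σ hij]
  refine exists_congr fun p => and_congr_right fun hip => and_congr_right fun hpj =>
    and_congr_right fun _ => ?_
  rw [Kmat_eq_iff_forall_Kmat_eq_Kmat_pred A B (by omega)]
  refine forall_congr' fun j' => ?_
  by_cases hpj' : p ≤ j'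
  · by_cases hj'j : j' ≤ j
    · simp only [hpj', hj'j, show p - 1 < j' by omega, true_imp_iff]
      exact Kmat_eq_Kmat_pred_iff_exists_density_ne_zero A B (by omega) (by omega)
        fun r hir hrj' => hval r j' hir hrj' hj'j
    · simp [hj'j]
  · simp [hpj', show ¬p - 1 < j' by omega]

end Kmat

def matchPositions (j : ℕ) (σ : α) (B : List α) : Set ℕ :=
  {p | 1 ≤ p ∧ p ≤ j ∧ B[p - 1]? = some σ}

theorem exists_isGreatest_matchPositions {j p : ℕ} {σ : α} {B : List α}
    (hp : p ∈ matchPositions j σ B) : ∃ k, IsGreatest (matchPositions j σ B) k :=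
  BddAbove.exists_isGreatest_of_nonempty ⟨j, fun _ hq => hq.2.1⟩ ⟨p, hp⟩

theorem prevmatch_eq_coe_iff {j k : ℕ} {σ : α} {B : List α} :
    prevmatch j σ B = (k : WithBot ℕ) ↔ IsGreatest (matchPositions j σ B) k := by
  have himage :
      prevmatch j σ B = sSup ((fun p : ℕ => (p : WithBot ℕ)) '' matchPositions j σ B) := by
    rw [prevmatch]
    congr 1
    ext x
    simp only [matchPositions, Set.mem_image, Set.mem_ofPred_eq]
    exact exists_congr fun p => by tauto
  by_cases hne : (matchPositions j σ B).Nonempty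
  · obtain ⟨k₀, hk₀⟩ := exists_isGreatest_matchPositions hne.some_mem
    rw [himage, (Nat.mono_cast.map_isGreatest hk₀).csSup_eq, Nat.cast_inj]
    exact ⟨fun h => h ▸ hk₀, fun h => hk₀.unique h⟩
  · rw [Set.not_nonempty_iff_eq_empty] at hne
    rw [himage, hne, Set.image_empty, WithBot.sSup_empty]
    simp [IsGreatest]

theorem stmt_11_general {α : Type*} (A B : List α) (n : ℕ) (σ : α)
    (hCol : ∀ j, 1 ≤ j → j ≤ n → ∀ i₁ i₂, 1 ≤ i₁ → i₁ ≤ n → 1 ≤ i₂ → i₂ ≤ n →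
      density (Kmat A B) i₁ j ≠ 0 → density (Kmat A B) i₂ j ≠ 0 → i₁ = i₂)
    (hVal : ∀ i, 1 ≤ i → i ≤ n → ∀ j, 1 ≤ j → j ≤ n →
      density (Kmat A B) i j ≠ 0 → density (Kmat A B) i j = 1) :
    ∀ i j : ℕ, i ≤ j → j ≤ n →
      (Kmat (A ++ [σ]) B i j - Kmat A B i j = 1 ↔
        ∃ k : ℕ, prevmatch j σ B = (k : WithBot ℕ) ∧
          (∀ j', k ≤ j' → j' ≤ j →
            ∃ i', 1 ≤ i' ∧ i' ≤ n ∧ density (Kmat A B) i' j' ≠ 0) ∧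
          (∀ i' j', k ≤ j' → j' ≤ j → 1 ≤ i' → i' ≤ n →
            density (Kmat A B) i' j' ≠ 0 → i < i')) := by
  intro i j hij hjn
  rw [Kmat_append_singleton_sub_eq_one_iff_pivots A B σ hij
    fun r j' hir hrj' hj'j => hVal r (by omega) (by omega) j' (by omega) (by omega)]
  constructor
  · rintro ⟨p, hip, hpj, hσ, hpiv⟩
    have hp : p ∈ matchPositions j σ B := ⟨by omega, hpj, hσ⟩
    obtain ⟨k, hk⟩ := exists_isGreatest_matchPositions hp
    have hpk : p ≤ k := hk.2 hp
    refine ⟨k, prevmatch_eq_coe_iff.2 hk, fun j' hkj' hj'j => ?_,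
      fun i' j' hkj' hj'j hi' hi'n hd => ?_⟩
    · obtain ⟨r, hir, hrj', hr⟩ := hpiv j' (by omega) hj'j
      exact ⟨r, by omega, by omega, hr⟩
    · obtain ⟨r, hir, hrj', hr⟩ := hpiv j' (by omega) hj'j
      have := hCol j' (by omega) (by omega) i' r hi' hi'n (by omega) (by omega) hd hr
      omega
  · rintro ⟨k, hk, hpiv, hbelow⟩
    obtain ⟨⟨hk1, hkj, hσ⟩, -⟩ := prevmatch_eq_coe_iff.1 hk
    have hpiv' : ∀ j', k ≤ j' → j' ≤ j → ∃ r, i < r ∧ r ≤ j' ∧ density (Kmat A B) r j' ≠ 0 := by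
      intro j' hkj' hj'j
      obtain ⟨r, hr1, hrn, hr⟩ := hpiv j' hkj' hj'j
      have hrj' : r ≤ j' := not_lt.1 fun h => hr (density_Kmat_eq_zero_of_lt A B (by omega) h)
      exact ⟨r, hbelow r j' hkj' hj'j hr1 hrn hr, hrj', hr⟩
    obtain ⟨r, hir, hrk, -⟩ := hpiv' k le_rfl hkj
    exact ⟨k, by omega, hkj, hσ, hpiv'⟩

/-- Diff[i,j] = 1 iff k = prevmatch(j,σ,B) > −∞, every column
k,…,j of K□ contains exactly one pivotal point, and i is less than the minimum
row index among all pivotal points of K□ in columns k,…,j. -/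
theorem stmt_11 {α : Type*} (A B : List α) (m n : ℕ)
    (hA : A.length = m) (hB : B.length = n) (σ : α)
    (hRow : ∀ i, 1 ≤ i → i ≤ n → ∀ j₁ j₂, 1 ≤ j₁ → j₁ ≤ n → 1 ≤ j₂ → j₂ ≤ n →
      density (Kmat A B) i j₁ ≠ 0 → density (Kmat A B) i j₂ ≠ 0 → j₁ = j₂)
    (hCol : ∀ j, 1 ≤ j → j ≤ n → ∀ i₁ i₂, 1 ≤ i₁ → i₁ ≤ n → 1 ≤ i₂ → i₂ ≤ n →
      density (Kmat A B) i₁ j ≠ 0 → density (Kmat A B) i₂ j ≠ 0 → i₁ = i₂)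
    (hVal : ∀ i, 1 ≤ i → i ≤ n → ∀ j, 1 ≤ j → j ≤ n →
      density (Kmat A B) i j ≠ 0 → density (Kmat A B) i j = 1) :
    ∀ i j : ℕ, i ≤ j → j ≤ n →
      (Kmat (A ++ [σ]) B i j - Kmat A B i j = 1 ↔
        ∃ k : ℕ, prevmatch j σ B = (k : WithBot ℕ) ∧
          (∀ j', k ≤ j' → j' ≤ j →
            ∃ i', 1 ≤ i' ∧ i' ≤ n ∧ density (Kmat A B) i' j' ≠ 0) ∧
          (∀ i' j', k ≤ j' → j' ≤ j → 1 ≤ i' → i' ≤ n →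
            density (Kmat A B) i' j' ≠ 0 → i < i')) :=
  stmt_11_general A B n σ hCol hVal
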